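/- arXiv:2210.14322 — 5 statements merged into one kernel-verified Lean document; each statement's English description precedes it below -/
import Mathlib

section
/- Let P₁, …, P_T be a sequence of preference matrices on K arms such that each P_t admits a Condorcet winner a_t*, and write δ_t(a,b) = P_t(a,b) − 1/2. Define the significant CW switch times recursively: τ̂₀ = 1, and τ̂_{i+1} is the smallest round in (τ̂_i, T) such that for every arm a ∈ [K] there exist rounds τ̂_i ≤ s₁ < s₂ < τ̂_{i+1} with Σ_{t=s₁}^{s₂} δ_t(a_t*, a) ≥ √(K·(s₂ − s₁)), if such a round exists. Let σS denote the number of significant CW switch times τ̂₁, …, τ̂_{σS}, and let S^CW = Σ_{t=2}^T 1{a_t* ≠ a_{t−1}*} denote the number of Condorcet winner switches. Then σS ≤ S^CW. -/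
open scoped Classical

open Finset

/-!
Between two consecutive significant switch times some arm `a` has a window with
`∑ δ_t(a_t*, a) ≥ √(K (s₂ - s₁)) > 0`; taking `a` to be the Condorcet winner at the start of the
interval, the window sum must be nonzero, whereas it would vanish (`δ_t(a, a) = 0`) if the
Condorcet winner never changed there. So every interval `(τ̂_i, τ̂_{i+1})` contains a Condorcet
winner switch, and these intervals are pairwise disjoint.
-/

theorem eq_of_forall_eq_pred_of_lt {α : Type*} {f : ℕ → α} {m n : ℕ}
    (h : ∀ t, m < t → t < n → f t = f (t - 1)) : ∀ t, m ≤ t → t < n → f t = f m := by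
  intro t hmt
  induction t, hmt using Nat.le_induction with
  | base => exact fun _ => rfl
  | succ t hmt ih =>
    intro htn
    rw [h (t + 1) (by omega) htn, Nat.add_sub_cancel]
    exact ih (by omega)

theorem card_le_of_forall_exists_mem_Ioo {τ : ℕ → ℕ} {n : ℕ} {S : Finset ℕ}
    (h : ∀ i < n, ∃ t ∈ S, τ i < t ∧ t < τ (i + 1)) : n ≤ #S := by
  obtain _ | n := n
  · exact Nat.zero_le _
  choose g hgS hg using fun i : Fin (n + 1) => h i i.2
  have hmono : StrictMono g :=
    Fin.strictMono_iff_lt_succ.2 fun i => (hg i.castSucc).2.trans (hg i.succ).1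
  simpa using card_le_card_of_injOn (s := univ) g (fun i _ => hgS i) hmono.injective.injOn

theorem exists_ne_pred_of_significant_window {K T : ℕ} (hK : 0 < K)
    {P : ℕ → Fin K → Fin K → ℝ} {astar : ℕ → Fin K}
    (hdiag : ∀ t ∈ Icc 1 T, ∀ a, P t a a = 1 / 2) {m n : ℕ} (hm : 1 ≤ m) (hn : n ≤ T)
    (hwin : ∃ s₁ s₂ : ℕ, m ≤ s₁ ∧ s₁ < s₂ ∧ s₂ < n ∧
      Real.sqrt ((K : ℝ) * ((s₂ : ℝ) - s₁)) ≤
        ∑ t ∈ Icc s₁ s₂, (P t (astar t) (astar m) - 1 / 2)) :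
    ∃ t, m < t ∧ t < n ∧ astar t ≠ astar (t - 1) := by
  by_contra! hconst
  obtain ⟨s₁, s₂, hms₁, hs₁₂, hs₂n, hsum⟩ := hwin
  have hzero : ∑ t ∈ Icc s₁ s₂, (P t (astar t) (astar m) - 1 / 2) = 0 := by
    refine sum_eq_zero fun t ht => ?_
    rw [mem_Icc] at ht
    rw [eq_of_forall_eq_pred_of_lt hconst t (by omega) (by omega),
      hdiag t (mem_Icc.2 ⟨by omega, by omega⟩), sub_self]
  have hpos : 0 < Real.sqrt ((K : ℝ) * ((s₂ : ℝ) - s₁)) := by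
    have : (s₁ : ℝ) < s₂ := by exact_mod_cast hs₁₂
    have : (0 : ℝ) < K := by exact_mod_cast hK
    positivity
  linarith

theorem stmt6_general {K T : ℕ} (hK : 0 < K)
    (P : ℕ → Fin K → Fin K → ℝ) (astar : ℕ → Fin K)
    (hP : ∀ t, t ∈ Finset.Icc 1 T →
      ∀ a b, (0 ≤ P t a b ∧ P t a b ≤ 1) ∧ P t a b + P t b a = 1)
    (τ : ℕ → ℕ) (σS : ℕ)
    (hτ0 : τ 0 = 1)
    (hτ : ∀ i < σS,
      τ i < τ (i + 1) ∧ τ (i + 1) < T ∧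
      (∀ a : Fin K, ∃ s₁ s₂ : ℕ, τ i ≤ s₁ ∧ s₁ < s₂ ∧ s₂ < τ (i + 1) ∧
        Real.sqrt ((K : ℝ) * ((s₂ : ℝ) - s₁)) ≤
          ∑ t ∈ Finset.Icc s₁ s₂, (P t (astar t) a - 1 / 2)) ∧
      (∀ r : ℕ, τ i < r → r < τ (i + 1) →
        ¬ (∀ a : Fin K, ∃ s₁ s₂ : ℕ, τ i ≤ s₁ ∧ s₁ < s₂ ∧ s₂ < r ∧
          Real.sqrt ((K : ℝ) * ((s₂ : ℝ) - s₁)) ≤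
            ∑ t ∈ Finset.Icc s₁ s₂, (P t (astar t) a - 1 / 2)))) :
    σS ≤ ∑ t ∈ Finset.Icc 2 T, if astar t ≠ astar (t - 1) then 1 else 0 := by
  have hdiag : ∀ t ∈ Icc 1 T, ∀ a, P t a a = 1 / 2 := fun t ht a => by
    linarith [(hP t ht a a).2]
  have hτ_pos : ∀ i < σS, 1 ≤ τ i := by
    intro i
    induction i with
    | zero => exact fun _ => hτ0.ge
    | succ i ih => exact fun hi => (ih (by omega)).trans (hτ i (by omega)).1.le
  rw [← card_filter]
  refine card_le_of_forall_exists_mem_Ioo (τ := τ) fun i hi => ?_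
  obtain ⟨-, hT, hwin, -⟩ := hτ i hi
  obtain ⟨t, hit, hti, hswitch⟩ :=
    exists_ne_pred_of_significant_window hK hdiag (hτ_pos i hi) hT.le (hwin (astar (τ i)))
  exact ⟨t, mem_filter.2 ⟨mem_Icc.2 ⟨by linarith [hτ_pos i hi], by omega⟩, hswitch⟩, hit, hti⟩

/-- The number of Significant Condorcet Winner Switches is at most the number of Condorcet
Winner Switches.  The significant switch times `τ̂₀ = 1 < τ̂₁ < … < τ̂_σS < T` are given
recursively: `τ̂_{i+1}` is the smallest round in `(τ̂_i, T)` such that every arm `a` has a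
window `τ̂_i ≤ s₁ < s₂ < τ̂_{i+1}` with `∑_{t=s₁}^{s₂} δ_t(a_t*, a) ≥ √(K (s₂ - s₁))`. -/
theorem stmt6 {K T : ℕ} (hK : 0 < K)
    (P : ℕ → Fin K → Fin K → ℝ) (astar : ℕ → Fin K)
    (hP : ∀ t, t ∈ Finset.Icc 1 T →
      ∀ a b, (0 ≤ P t a b ∧ P t a b ≤ 1) ∧ P t a b + P t b a = 1)
    (hCW : ∀ t, t ∈ Finset.Icc 1 T → ∀ b, b ≠ astar t → 1 / 2 < P t (astar t) b)
    (τ : ℕ → ℕ) (σS : ℕ)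
    (hτ0 : τ 0 = 1)
    (hτ : ∀ i < σS,
      τ i < τ (i + 1) ∧ τ (i + 1) < T ∧
      (∀ a : Fin K, ∃ s₁ s₂ : ℕ, τ i ≤ s₁ ∧ s₁ < s₂ ∧ s₂ < τ (i + 1) ∧
        Real.sqrt ((K : ℝ) * ((s₂ : ℝ) - s₁)) ≤
          ∑ t ∈ Finset.Icc s₁ s₂, (P t (astar t) a - 1 / 2)) ∧
      (∀ r : ℕ, τ i < r → r < τ (i + 1) →
        ¬ (∀ a : Fin K, ∃ s₁ s₂ : ℕ, τ i ≤ s₁ ∧ s₁ < s₂ ∧ s₂ < r ∧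
          Real.sqrt ((K : ℝ) * ((s₂ : ℝ) - s₁)) ≤
            ∑ t ∈ Finset.Icc s₁ s₂, (P t (astar t) a - 1 / 2)))) :
    σS ≤ ∑ t ∈ Finset.Icc 2 T, if astar t ≠ astar (t - 1) then 1 else 0 :=
  stmt6_general hK P astar hP τ σS hτ0 hτ
end

section
/- Let S ≥ 1 be an integer, K ≥ 1 and T > 0 real numbers, and let L₀, …, L_S > 0 be positive reals with Σ_{i=0}^{S} L_i ≤ T. Suppose V₀, …, V_{S−1} are nonnegative reals such that V_i ≥ √(K / L_i) for every 0 ≤ i ≤ S − 1. Then Σ_{i=0}^{S} K·√(L_i) ≤ K·√T + (Σ_{i=0}^{S−1} V_i)^{1/3} · K^{5/6} · T^{2/3}. -/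
/-!
Each of the first `S` phases satisfies `K / L_i ≤ V_i²`, so `K √L_i = K^{5/6} (K/L_i)^{1/6} L_i^{2/3}
≤ K^{5/6} V_i^{1/3} L_i^{2/3}`; Hölder's inequality with exponents `3` and `3/2` bounds the sum of
these by `K^{5/6} (∑ V_i)^{1/3} (∑ L_i)^{2/3}`. The last phase only contributes `K √L_S ≤ K √T`.
-/

open Finset Real

theorem Finset.sum_rpow_mul_rpow_le {ι : Type*} (s : Finset ι) {f g : ι → ℝ}
    (hf : ∀ i ∈ s, 0 ≤ f i) (hg : ∀ i ∈ s, 0 ≤ g i) {a b : ℝ} (ha : 0 < a) (hb : 0 < b)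
    (hab : a + b = 1) :
    ∑ i ∈ s, f i ^ a * g i ^ b ≤ (∑ i ∈ s, f i) ^ a * (∑ i ∈ s, g i) ^ b := by
  have holder := inner_le_Lp_mul_Lq_of_nonneg s (HolderConjugate.inv_inv ha hb hab)
    (fun i hi ↦ rpow_nonneg (hf i hi) a) (fun i hi ↦ rpow_nonneg (hg i hi) b)
  rwa [sum_congr rfl fun i hi ↦ rpow_rpow_inv (hf i hi) ha.ne',
    sum_congr rfl fun i hi ↦ rpow_rpow_inv (hg i hi) hb.ne', one_div, one_div, inv_inv, inv_inv]
    at holder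

theorem Real.mul_sqrt_le_of_sqrt_div_le {K L V : ℝ} (hK : 0 ≤ K) (hL : 0 < L)
    (hV : √(K / L) ≤ V) :
    K * √L ≤ K ^ ((5 : ℝ) / 6) * (V ^ ((1 : ℝ) / 3) * L ^ ((2 : ℝ) / 3)) := by
  have hKL : K * √L = K ^ ((5 : ℝ) / 6) * (√(K / L) ^ ((1 : ℝ) / 3) * L ^ ((2 : ℝ) / 3)) := by
    rw [sqrt_eq_rpow, sqrt_eq_rpow, ← rpow_mul (div_nonneg hK hL.le), div_rpow hK hL.le]
    calc K * L ^ ((1 : ℝ) / 2) = K ^ ((5 : ℝ) / 6 + 1 / 6) * L ^ ((2 : ℝ) / 3 - 1 / 6) := by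
          norm_num
      _ = _ := by
          rw [rpow_add' hK (by norm_num), rpow_sub hL]
          ring_nf
  rw [hKL]
  gcongr

theorem Finset.sum_mul_sqrt_le_of_sqrt_div_le {ι : Type*} (s : Finset ι) {K : ℝ} {L V : ι → ℝ}
    (hK : 0 ≤ K) (hL : ∀ i ∈ s, 0 < L i) (hV : ∀ i ∈ s, √(K / L i) ≤ V i) :
    ∑ i ∈ s, K * √(L i) ≤
      K ^ ((5 : ℝ) / 6) * ((∑ i ∈ s, V i) ^ ((1 : ℝ) / 3) * (∑ i ∈ s, L i) ^ ((2 : ℝ) / 3)) :=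
  calc ∑ i ∈ s, K * √(L i)
      ≤ K ^ ((5 : ℝ) / 6) * ∑ i ∈ s, V i ^ ((1 : ℝ) / 3) * L i ^ ((2 : ℝ) / 3) := by
        rw [mul_sum]
        exact sum_le_sum fun i hi ↦ mul_sqrt_le_of_sqrt_div_le hK (hL i hi) (hV i hi)
    _ ≤ _ := by
        gcongr
        exact sum_rpow_mul_rpow_le s (fun i hi ↦ (sqrt_nonneg _).trans (hV i hi))
          (fun i hi ↦ (hL i hi).le) (by norm_num) (by norm_num) (by norm_num)

theorem stmt8_general (S : ℕ) (K T : ℝ) (hK : 1 ≤ K)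
    (L : ℕ → ℝ) (hL : ∀ i ≤ S, 0 < L i)
    (hLsum : ∑ i ∈ Finset.range (S + 1), L i ≤ T)
    (V : ℕ → ℝ)
    (hV : ∀ i ≤ S - 1, Real.sqrt (K / L i) ≤ V i) :
    ∑ i ∈ Finset.range (S + 1), K * Real.sqrt (L i) ≤
      K * Real.sqrt T +
        (∑ i ∈ Finset.range S, V i) ^ ((1 : ℝ) / 3) * K ^ ((5 : ℝ) / 6) *
          T ^ ((2 : ℝ) / 3) := by
  have hK0 : 0 ≤ K := zero_le_one.trans hK
  have hLpos : ∀ i ∈ range S, 0 < L i := fun i hi ↦ hL i (mem_range.1 hi).le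
  have hVi : ∀ i ∈ range S, √(K / L i) ≤ V i := fun i hi ↦ hV i (by grind)
  have hLsum' : ∑ i ∈ range S, L i + L S ≤ T := sum_range_succ L S ▸ hLsum
  have hLS : L S ≤ T := by linarith [sum_nonneg fun i hi ↦ (hLpos i hi).le]
  have hsumT : (∑ i ∈ range S, L i) ^ ((2 : ℝ) / 3) ≤ T ^ ((2 : ℝ) / 3) := by
    gcongr
    · exact sum_nonneg fun i hi ↦ (hLpos i hi).le
    · linarith [hL S le_rfl]
  have hVsum : 0 ≤ (∑ i ∈ range S, V i) ^ ((1 : ℝ) / 3) :=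
    rpow_nonneg (sum_nonneg fun i hi ↦ (sqrt_nonneg _).trans (hVi i hi)) _
  rw [sum_range_succ]
  calc ∑ i ∈ range S, K * √(L i) + K * √(L S)
      ≤ K ^ ((5 : ℝ) / 6) *
            ((∑ i ∈ range S, V i) ^ ((1 : ℝ) / 3) * (∑ i ∈ range S, L i) ^ ((2 : ℝ) / 3)) +
          K * √T := add_le_add (sum_mul_sqrt_le_of_sqrt_div_le (range S) hK0 hLpos hVi)
            (by gcongr)
    _ ≤ K ^ ((5 : ℝ) / 6) * ((∑ i ∈ range S, V i) ^ ((1 : ℝ) / 3) * T ^ ((2 : ℝ) / 3)) +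
          K * √T := by gcongr
    _ = _ := by ring

/-- The Hölder-inequality step: if `L₀, …, L_S > 0` sum to at most `T` and
`V_i ≥ √(K / L_i)` for `i ≤ S - 1`, then
`∑_{i=0}^S K √(L_i) ≤ K √T + (∑_{i=0}^{S-1} V_i)^{1/3} K^{5/6} T^{2/3}`. -/
theorem stmt8 (S : ℕ) (hS : 1 ≤ S) (K T : ℝ) (hK : 1 ≤ K) (hT : 0 < T)
    (L : ℕ → ℝ) (hL : ∀ i ≤ S, 0 < L i)
    (hLsum : ∑ i ∈ Finset.range (S + 1), L i ≤ T)
    (V : ℕ → ℝ) (hV0 : ∀ i ≤ S - 1, 0 ≤ V i)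
    (hV : ∀ i ≤ S - 1, Real.sqrt (K / L i) ≤ V i) :
    ∑ i ∈ Finset.range (S + 1), K * Real.sqrt (L i) ≤
      K * Real.sqrt T +
        (∑ i ∈ Finset.range S, V i) ^ ((1 : ℝ) / 3) * K ^ ((5 : ℝ) / 6) *
          T ^ ((2 : ℝ) / 3) :=
  stmt8_general S K T hK L hL hLsum V hV
end

section
/- Let u : [K] → ℝ be a utility function and let σ : ℝ → ℝ be a monotonically increasing function with 0 ≤ σ(x) ≤ 1 and σ(x) = 1 − σ(−x) for all x (so σ(0) = 1/2). Define P(a,b) = σ(u(a) − u(b)). Then P is a preference matrix on K arms satisfying strong stochastic transitivity (SST). If, in addition, σ is concave on [0, ∞), then P also satisfies the stochastic triangle inequality (STI). -/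
/-! A positive gap `σ x > 1/2` forces `x > 0`, because `σ 0 = 1/2` and `σ` is monotone. Hence
for `a ≻ b ≻ c` both utility differences `x = u a - u b` and `y = u b - u c` are positive and
`u a - u c = x + y`. SST is then monotonicity of `σ`, and STI is the superadditivity
`σ (x + y) + σ 0 ≤ σ x + σ y` of a function concave on `[0, ∞)`. -/

theorem ConcaveOn.apply_add_add_apply_zero_le {𝕜 : Type*} [Field 𝕜] [LinearOrder 𝕜]
    [IsStrictOrderedRing 𝕜] {f : 𝕜 → 𝕜} (hf : ConcaveOn 𝕜 (Set.Ici 0) f) {x y : 𝕜}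
    (hx : 0 ≤ x) (hy : 0 ≤ y) : f (x + y) + f 0 ≤ f x + f y := by
  rcases (add_nonneg hx hy).eq_or_lt with hxy | hxy
  · obtain ⟨rfl, rfl⟩ : x = 0 ∧ y = 0 := (add_eq_zero_iff_of_nonneg hx hy).1 hxy.symm
    simp
  have hsum : x / (x + y) + y / (x + y) = 1 := by field_simp
  have hsum' : y / (x + y) + x / (x + y) = 1 := by rw [add_comm, hsum]
  -- `x` and `y` are the two convex combinations of the endpoints `x + y` and `0`
  have hfx := hf.2 (Set.mem_Ici.2 hxy.le) Set.self_mem_Ici (by positivity) (by positivity) hsum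
  have hfy := hf.2 (Set.mem_Ici.2 hxy.le) Set.self_mem_Ici (by positivity) (by positivity) hsum'
  simp only [smul_eq_mul, mul_zero, add_zero, div_mul_cancel₀ _ hxy.ne'] at hfx hfy
  linear_combination hfx + hfy - (f (x + y) + f 0) * hsum

section LinkFunction

variable {σ : ℝ → ℝ}

theorem link_apply_add_apply_neg (hsymm : ∀ x, σ x = 1 - σ (-x)) (x : ℝ) :
    σ x + σ (-x) = 1 := by
  linarith [hsymm x]

theorem link_apply_zero (hsymm : ∀ x, σ x = 1 - σ (-x)) : σ 0 = 1 / 2 := by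
  have h := link_apply_add_apply_neg hsymm 0
  rw [neg_zero] at h
  linarith

theorem pos_of_half_lt_link (hmono : Monotone σ) (hsymm : ∀ x, σ x = 1 - σ (-x)) {x : ℝ}
    (hx : 1 / 2 < σ x) : 0 < x := by
  by_contra! h
  linarith [hmono h, link_apply_zero hsymm]

theorem link_max_gap_le (hmono : Monotone σ) (hsymm : ∀ x, σ x = 1 - σ (-x)) {x y : ℝ}
    (hx : 1 / 2 < σ x) (hy : 1 / 2 < σ y) :
    max (σ x - 1 / 2) (σ y - 1 / 2) ≤ σ (x + y) - 1 / 2 := by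
  have hx₀ := pos_of_half_lt_link hmono hsymm hx
  have hy₀ := pos_of_half_lt_link hmono hsymm hy
  have hσx : σ x ≤ σ (x + y) := hmono (by linarith)
  have hσy : σ y ≤ σ (x + y) := hmono (by linarith)
  exact max_le (by linarith) (by linarith)

theorem link_gap_le_add (hmono : Monotone σ) (hsymm : ∀ x, σ x = 1 - σ (-x))
    (hconc : ConcaveOn ℝ (Set.Ici 0) σ) {x y : ℝ} (hx : 1 / 2 < σ x) (hy : 1 / 2 < σ y) :
    σ (x + y) - 1 / 2 ≤ (σ x - 1 / 2) + (σ y - 1 / 2) := by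
  have hsuper := hconc.apply_add_add_apply_zero_le
    (pos_of_half_lt_link hmono hsymm hx).le (pos_of_half_lt_link hmono hsymm hy).le
  linarith [link_apply_zero hsymm]

end LinkFunction

/-- A utility-based preference model `P(a,b) = σ(u(a) - u(b))` with a monotonically
increasing link function `σ` taking values in `[0,1]` and satisfying `σ(x) = 1 - σ(-x)`
is a preference matrix satisfying strong stochastic transitivity (SST); if moreover `σ` is
concave on `[0, ∞)`, it also satisfies the stochastic triangle inequality (STI). -/
theorem stmt11 {K : ℕ} (u : Fin K → ℝ) (σ : ℝ → ℝ)
    (hmono : Monotone σ) (h01 : ∀ x, 0 ≤ σ x ∧ σ x ≤ 1)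
    (hsymm : ∀ x, σ x = 1 - σ (-x)) :
    (∀ a b : Fin K, 0 ≤ σ (u a - u b) ∧ σ (u a - u b) ≤ 1) ∧
    (∀ a b : Fin K, σ (u a - u b) + σ (u b - u a) = 1) ∧
    (∀ a b c : Fin K, 1 / 2 < σ (u a - u b) → 1 / 2 < σ (u b - u c) →
      max (σ (u a - u b) - 1 / 2) (σ (u b - u c) - 1 / 2) ≤ σ (u a - u c) - 1 / 2) ∧
    (ConcaveOn ℝ (Set.Ici (0 : ℝ)) σ →
      ∀ a b c : Fin K, 1 / 2 < σ (u a - u b) → 1 / 2 < σ (u b - u c) →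
        σ (u a - u c) - 1 / 2 ≤
          (σ (u a - u b) - 1 / 2) + (σ (u b - u c) - 1 / 2)) := by
  refine ⟨fun a b => h01 _, fun a b => ?_, fun a b c hab hbc => ?_,
    fun hconc a b c hab hbc => ?_⟩
  · simpa only [neg_sub] using link_apply_add_apply_neg hsymm (u a - u b)
  · simpa only [sub_add_sub_cancel] using link_max_gap_le hmono hsymm hab hbc
  · simpa only [sub_add_sub_cancel] using link_gap_le_add hmono hsymm hconc hab hbc
end

section
/- Let s < e be natural numbers, let A ≥ 0 be a real number, let (x_t)_{s ≤ t ≤ e} be real numbers, and set m = ⌈(s + e)/2⌉. If Σ_{t=s}^{e} x_t > A·√(e − s) and Σ_{t=s}^{m−1} x_t ≤ A·√((m − 1) − s), then Σ_{t=m}^{e} x_t ≥ (A/4)·√(e − m). -/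
/-
With `a = (m - 1) - s` and `b = e - m` the segment has length `e - s = a + b + 1`, and the
choice of `m` as the ceiling of the midpoint gives `a ≤ b`. Subtracting the first-half bound
from the total shows that the second half carries more than `A (√(a + b + 1) - √a)`, and
`√a + √b / 4 ≤ √(a + b + 1)` because squaring leaves `√(ab) / 2 ≤ 15 b / 16 + 1`, true for `a ≤ b`.
-/

theorem Finset.sum_Icc_consecutive {M : Type*} [AddCommMonoid M] (f : ℕ → M) {a n b : ℕ}
    (han : a ≤ n + 1) (hnb : n ≤ b) :
    ∑ t ∈ Icc a b, f t = ∑ t ∈ Icc a n, f t + ∑ t ∈ Icc (n + 1) b, f t := by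
  simp only [← Ico_add_one_right_eq_Icc]
  exact (sum_Ico_consecutive f han (by omega)).symm

theorem Real.sqrt_add_sqrt_div_four_le {a b : ℝ} (ha : 0 ≤ a) (hab : a ≤ b) :
    √a + √b / 4 ≤ √(a + b + 1) := by
  have hb : 0 ≤ b := ha.trans hab
  have hmul : √a * √b ≤ b := by
    simpa [Real.mul_self_sqrt hb] using mul_le_mul_of_nonneg_right (Real.sqrt_le_sqrt hab) (Real.sqrt_nonneg b)
  rw [Real.le_sqrt (by positivity) (by linarith)]
  nlinarith [Real.sq_sqrt ha, Real.sq_sqrt hb]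

theorem le_of_add_lt_of_le_mul_sqrt {A a b S₁ S₂ : ℝ} (hA : 0 ≤ A) (ha : 0 ≤ a) (hab : a ≤ b)
    (htotal : A * √(a + b + 1) < S₁ + S₂) (hfirst : S₁ ≤ A * √a) :
    A / 4 * √b ≤ S₂ := by
  have := mul_le_mul_of_nonneg_left (Real.sqrt_add_sqrt_div_four_le ha hab) hA
  linarith

/-- If an arm accumulates regret more than `A √(e - s)` over a bad segment `[s, e]` but at
most `A √((m-1) - s)` over its first half `[s, m-1]`, where `m = ⌈(s+e)/2⌉` is the
midpoint, then it accumulates regret at least `(A/4) √(e - m)` over the second half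
`[m, e]`. -/
theorem stmt13 (s e m : ℕ) (hse : s < e) (hm : m = (s + e + 1) / 2)
    (A : ℝ) (hA : 0 ≤ A) (x : ℕ → ℝ)
    (h1 : A * Real.sqrt ((e : ℝ) - s) < ∑ t ∈ Finset.Icc s e, x t)
    (h2 : ∑ t ∈ Finset.Icc s (m - 1), x t ≤ A * Real.sqrt (((m : ℝ) - 1) - s)) :
    A / 4 * Real.sqrt ((e : ℝ) - m) ≤ ∑ t ∈ Finset.Icc m e, x t := by
  obtain ⟨n, rfl⟩ : ∃ n, m = n + 1 := ⟨m - 1, by omega⟩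
  have hsn : s ≤ n := by omega
  have hne : 2 * n + 1 ≤ s + e := by omega
  rw [Finset.sum_Icc_consecutive x (by omega) (by omega : n ≤ e)] at h1
  simp only [Nat.add_sub_cancel, Nat.cast_add, Nat.cast_one, add_sub_cancel_right] at h2 ⊢
  have hsn' : (s : ℝ) ≤ n := by exact_mod_cast hsn
  have hne' : 2 * (n : ℝ) + 1 ≤ s + e := by exact_mod_cast hne
  refine le_of_add_lt_of_le_mul_sqrt hA (by linarith) (by linarith) ?_ h2
  convert h1 using 3
  ring
end

section
/- Let t₀ < S be natural numbers and let (s_j, e_j, m_j)_{j=1}^{J} be triples of natural numbers satisfying t₀ < s_j < e_j ≤ S and e_j − s_j ≤ m_j ≤ 2(e_j − s_j) for each j, and set s̃_j = ⌈(s_j + e_j)/2⌉. Then Σ_{j=1}^{J} Σ_{s=s_j}^{s̃_j} 1/√(m_j · (s − t₀)) ≥ (1/4) · Σ_{j=1}^{J} √((e_j − s_j)/(S − t₀)). -/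
/-!
For a single segment, each of the at least `(e - s) / 2` rounds `r ∈ [s, s̃]` contributes at
least `1 / √(2 (e - s) (S - t₀))`, because `m ≤ 2 (e - s)` and `r - t₀ ≤ S - t₀`. Together they
give `√((e - s) / (S - t₀)) / (2√2)`, which is at least a quarter of `√((e - s) / (S - t₀))`.
-/

open Finset

lemma sub_le_two_mul_card_Icc_midpoint (s e : ℕ) : e - s ≤ 2 * #(Icc s ((s + e + 1) / 2)) := by
  rw [Nat.card_Icc]; omega

lemma sqrt_div_div_four_le_half_div_sqrt_two_mul (L D : ℝ) (hL : 0 < L) (hD : 0 < D) :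
    √(L / D) / 4 ≤ L / 2 / √(2 * L * D) := by
  have h2 : √2 ≤ 2 := by rw [Real.sqrt_le_left] <;> norm_num
  have hLs : √L * √L = L := Real.mul_self_sqrt hL.le
  have := Real.sqrt_pos.2 hL
  have := Real.sqrt_pos.2 hD
  rw [Real.sqrt_div hL.le, Real.sqrt_mul (by positivity), Real.sqrt_mul (by positivity),
    div_div, div_div, div_le_div_iff₀ (by positivity) (by positivity)]
  calc √L * (2 * (√2 * √L * √D)) = √2 * (√L * √L) * (2 * √D) := by ring
    _ ≤ 2 * L * (2 * √D) := by rw [hLs]; gcongr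
    _ = L * (√D * 4) := by ring

lemma quarter_sqrt_le_sum_Icc_midpoint {t₀ S s e m : ℕ} (hs : t₀ < s) (hse : s ≤ e)
    (heS : e ≤ S) (hm0 : 0 < m) (hm : m ≤ 2 * (e - s)) :
    1 / 4 * √(((e : ℝ) - s) / ((S : ℝ) - t₀)) ≤
      ∑ r ∈ Icc s ((s + e + 1) / 2), 1 / √((m : ℝ) * ((r : ℝ) - t₀)) := by
  have hLcast : ((e - s : ℕ) : ℝ) = (e : ℝ) - s := Nat.cast_sub hse
  set L : ℝ := (e : ℝ) - s
  set D : ℝ := (S : ℝ) - t₀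
  have hmL : (m : ℝ) ≤ 2 * L := by rw [← hLcast]; exact_mod_cast hm
  have hL : 0 < L := by linarith [(Nat.cast_pos.2 hm0 : (0 : ℝ) < m)]
  have hD : 0 < D := sub_pos.2 (by exact_mod_cast hs.trans_le (hse.trans heS))
  have hcard : L / 2 ≤ #(Icc s ((s + e + 1) / 2)) := by
    rw [← hLcast, div_le_iff₀' two_pos]
    exact_mod_cast sub_le_two_mul_card_Icc_midpoint s e
  have hterm : ∀ r ∈ Icc s ((s + e + 1) / 2),
      1 / √(2 * L * D) ≤ 1 / √((m : ℝ) * ((r : ℝ) - t₀)) := by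
    intro r hr
    rw [mem_Icc] at hr
    have hr₀ : (t₀ : ℝ) < r := by exact_mod_cast hs.trans_le hr.1
    have hrS : (r : ℝ) ≤ S := by norm_cast; omega
    gcongr
    exact sub_le_sub_right hrS _
  calc 1 / 4 * √(L / D) = √(L / D) / 4 := by ring
    _ ≤ L / 2 / √(2 * L * D) := sqrt_div_div_four_le_half_div_sqrt_two_mul L D hL hD
    _ = L / 2 * (1 / √(2 * L * D)) := by ring
    _ ≤ #(Icc s ((s + e + 1) / 2)) * (1 / √(2 * L * D)) := by gcongr
    _ ≤ _ := by rw [← nsmul_eq_mul]; exact card_nsmul_le_sum _ _ _ hterm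

theorem stmt17_general (t₀ S : ℕ) (J : ℕ) (s e m : ℕ → ℕ)
    (hs : ∀ j < J, t₀ < s j) (hse : ∀ j < J, s j < e j) (heS : ∀ j < J, e j ≤ S)
    (hm1 : ∀ j < J, e j - s j ≤ m j) (hm2 : ∀ j < J, m j ≤ 2 * (e j - s j)) :
    (1 / 4 : ℝ) * ∑ j ∈ Finset.range J,
        Real.sqrt (((e j : ℝ) - s j) / ((S : ℝ) - t₀)) ≤
      ∑ j ∈ Finset.range J, ∑ r ∈ Finset.Icc (s j) ((s j + e j + 1) / 2),
        1 / Real.sqrt ((m j : ℝ) * ((r : ℝ) - t₀)) := by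
  rw [Finset.mul_sum]
  refine Finset.sum_le_sum fun j hj => ?_
  rw [Finset.mem_range] at hj
  have hm0 : 0 < m j := by have := hse j hj; have := hm1 j hj; omega
  exact quarter_sqrt_le_sum_Icc_midpoint (hs j hj) (hse j hj).le (heS j hj) hm0 (hm2 j hj)

/-- The expected number of perfectly timed replays is lower-bounded: for bad segments
`[s_j, e_j) ⊆ (t₀, S]` with dyadic replay lengths `e_j - s_j ≤ m_j ≤ 2 (e_j - s_j)` and
midpoints `s̃_j = ⌈(s_j + e_j)/2⌉`,
`∑_j ∑_{s=s_j}^{s̃_j} 1/√(m_j (s - t₀)) ≥ (1/4) ∑_j √((e_j - s_j)/(S - t₀))`. -/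
theorem stmt17 (t₀ S : ℕ) (htS : t₀ < S) (J : ℕ) (s e m : ℕ → ℕ)
    (hs : ∀ j < J, t₀ < s j) (hse : ∀ j < J, s j < e j) (heS : ∀ j < J, e j ≤ S)
    (hm1 : ∀ j < J, e j - s j ≤ m j) (hm2 : ∀ j < J, m j ≤ 2 * (e j - s j)) :
    (1 / 4 : ℝ) * ∑ j ∈ Finset.range J,
        Real.sqrt (((e j : ℝ) - s j) / ((S : ℝ) - t₀)) ≤
      ∑ j ∈ Finset.range J, ∑ r ∈ Finset.Icc (s j) ((s j + e j + 1) / 2),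
        1 / Real.sqrt ((m j : ℝ) * ((r : ℝ) - t₀)) :=
  stmt17_general t₀ S J s e m hs hse heS hm1 hm2
end
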